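/- Let K be the field of formal Laurent series over ℂ. For all nonzero a, b ∈ K, the equation a·x² + b·y² = 1 has a solution (x, y) ∈ K². -/

import Mathlib

open PowerSeries

noncomputable def sqrtAux (f : ℕ → ℂ) : ℕ → ℂ
  | 0 => 1
  | (n+1) => (f (n+1) -
      ∑ i ∈ (Finset.range n).attach, sqrtAux f (i+1) * sqrtAux f (n-i)) / 2
  decreasing_by
  · have := i.2; simp only [Finset.mem_range] at this; omega
  · have := i.2; simp only [Finset.mem_range] at this; omega

lemma sqrtAux_spec (f : PowerSeries ℂ) (hf : PowerSeries.constantCoeff f = 1) :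
    (PowerSeries.mk (sqrtAux (fun n => PowerSeries.coeff n f))) ^ 2 = f := by
  have h1 : sqrtAux (fun n => PowerSeries.coeff n f) 0 = 1 := by
    simp [sqrtAux]
  have h2 : ∀ n : ℕ, sqrtAux (fun n => PowerSeries.coeff n f) (n+1) =
      (PowerSeries.coeff (n+1) f -
        ∑ i ∈ Finset.range n,
          sqrtAux (fun n => PowerSeries.coeff n f) (i+1) *
          sqrtAux (fun n => PowerSeries.coeff n f) (n-i)) / 2 := by
    intro n
    conv_lhs => rw [sqrtAux]
    rw [Finset.sum_attach (Finset.range n)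
      (fun i => sqrtAux (fun n => PowerSeries.coeff n f) (i+1) *
        sqrtAux (fun n => PowerSeries.coeff n f) (n-i))]
  ext n
  rw [pow_two, PowerSeries.coeff_mul, Finset.Nat.sum_antidiagonal_eq_sum_range_succ_mk]
  cases n with
  | zero =>
    simp only [Finset.sum_range_one, PowerSeries.coeff_mk, Nat.sub_zero, h1, one_mul]
    rw [← hf, ← PowerSeries.coeff_zero_eq_constantCoeff_apply]
  | succ n =>
    rw [Finset.sum_range_succ, Finset.sum_range_succ']
    simp only [PowerSeries.coeff_mk, Nat.sub_zero, Nat.sub_self]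
    have h3 : ∀ i ∈ Finset.range n,
        sqrtAux (fun n => PowerSeries.coeff n f) (i+1) *
          sqrtAux (fun n => PowerSeries.coeff n f) (n+1-(i+1)) =
        sqrtAux (fun n => PowerSeries.coeff n f) (i+1) *
          sqrtAux (fun n => PowerSeries.coeff n f) (n-i) := by
      intro i hi; congr 2; omega
    rw [Finset.sum_congr rfl h3, h1, h2 n]
    ring

lemma exists_sq_powerSeries (f : PowerSeries ℂ)
    (hf : PowerSeries.constantCoeff f ≠ 0) :
    ∃ g : PowerSeries ℂ, g ^ 2 = f := by
  set c := PowerSeries.constantCoeff f with hc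
  obtain ⟨d, hd⟩ := IsAlgClosed.exists_pow_nat_eq c (n := 2) (by norm_num)
  have hd0 : d ≠ 0 := by
    rintro rfl; apply hf; rw [← hd]; ring
  set h : PowerSeries ℂ := PowerSeries.C c⁻¹ * f with hh
  have hh1 : PowerSeries.constantCoeff h = 1 := by
    simp [hh, ← hc, inv_mul_cancel₀ hf]
  obtain ⟨g, hg⟩ : ∃ g : PowerSeries ℂ, g ^ 2 = h := ⟨_, sqrtAux_spec h hh1⟩
  refine ⟨PowerSeries.C d * g, ?_⟩
  rw [mul_pow, hg, hh, ← mul_assoc, ← map_pow, hd, ← map_mul,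
    mul_inv_cancel₀ hf, map_one, one_mul]

lemma laurent_sq_or (x : LaurentSeries ℂ) (hx : x ≠ 0) :
    ∃ u : LaurentSeries ℂ,
      x = u ^ 2 ∨ x = HahnSeries.single 1 1 * u ^ 2 := by
  have key := x.single_order_mul_powerSeriesPart
  have hcc : PowerSeries.constantCoeff x.powerSeriesPart ≠ 0 := by
    rw [← PowerSeries.coeff_zero_eq_constantCoeff_apply]
    simpa using HahnSeries.coeff_order_eq_zero.not.2 hx
  obtain ⟨g, hg⟩ := exists_sq_powerSeries _ hcc
  have hgx : (HahnSeries.single x.order 1 : LaurentSeries ℂ) *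
      ((HahnSeries.ofPowerSeries ℤ ℂ g) ^ 2) = x := by
    rw [← map_pow, hg]; exact key
  rcases Int.even_or_odd x.order with ⟨m, hm⟩ | ⟨m, hm⟩
  · refine ⟨HahnSeries.single m 1 * HahnSeries.ofPowerSeries ℤ ℂ g, Or.inl ?_⟩
    rw [mul_pow, ← hgx]
    congr 1
    rw [sq, HahnSeries.single_mul_single, mul_one, ← hm]
  · refine ⟨HahnSeries.single m 1 * HahnSeries.ofPowerSeries ℤ ℂ g, Or.inr ?_⟩
    rw [mul_pow, ← hgx, ← mul_assoc]
    congr 1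
    rw [sq, HahnSeries.single_mul_single, HahnSeries.single_mul_single, mul_one, mul_one,
      hm, show (2*m+1 : ℤ) = 1+(m+m) from by ring]

theorem conic_has_point_in_laurentSeries (a b : LaurentSeries ℂ)
    (ha : a ≠ 0) (hb : b ≠ 0) :
    ∃ x y : LaurentSeries ℂ, a * x ^ 2 + b * y ^ 2 = 1 := by
  set T : LaurentSeries ℂ := HahnSeries.single 1 1 with hT
  have hT0 : T ≠ 0 := HahnSeries.single_ne_zero one_ne_zero
  obtain ⟨u, hu | hu⟩ := laurent_sq_or a ha
  · have hu0 : u ≠ 0 := by rintro rfl; simp at hu; exact ha hu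
    refine ⟨u⁻¹, 0, ?_⟩
    rw [hu]
    field_simp
    simp
  obtain ⟨v, hv | hv⟩ := laurent_sq_or b hb
  · have hv0 : v ≠ 0 := by rintro rfl; simp at hv; exact hb hv
    refine ⟨0, v⁻¹, ?_⟩
    rw [hv]
    field_simp
    simp
  · have hu0 : u ≠ 0 := by rintro rfl; simp at hu; exact ha hu
    have hv0 : v ≠ 0 := by rintro rfl; simp at hv; exact hb hv
    set I : LaurentSeries ℂ := HahnSeries.C Complex.I with hI
    have hI2 : I ^ 2 = -1 := by
      rw [hI, ← map_pow, Complex.I_sq, map_neg, map_one]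
    set s : LaurentSeries ℂ := T⁻¹ with hs
    have hTs : T * s = 1 := mul_inv_cancel₀ hT0
    refine ⟨(s + 1) / 2 * u⁻¹, I * (s - 1) / 2 * v⁻¹, ?_⟩
    rw [hu, hv, ← hT]
    have huu : u * u⁻¹ = 1 := mul_inv_cancel₀ hu0
    have hvv : v * v⁻¹ = 1 := mul_inv_cancel₀ hv0
    have h20 : (2:LaurentSeries ℂ) ≠ 0 := by
      have : ((HahnSeries.C (2:ℂ)) : LaurentSeries ℂ) ≠ 0 := by
        exact HahnSeries.C_ne_zero (two_ne_zero : (2:ℂ) ≠ 0)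
      simpa [map_ofNat] using this
    have h2 : ((2:LaurentSeries ℂ))⁻¹ * 2 = 1 := inv_mul_cancel₀ h20
    linear_combination (T*(s+1)^2*(u*u⁻¹+1)*(2:LaurentSeries ℂ)⁻¹^2) * huu
      + (T*(s-1)^2*(v*v⁻¹)^2*(2:LaurentSeries ℂ)⁻¹^2) * hI2
      + (-(T*(s-1)^2*(v*v⁻¹+1)*(2:LaurentSeries ℂ)⁻¹^2)) * hvv
      + (T*s*((2:LaurentSeries ℂ)⁻¹*2+1)) * h2
      + hTs
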